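/- arXiv:math/0111096 — 3 statements merged into one kernel-verified Lean document; each statement's English description precedes it below -/
import Mathlib

section
/- Let A be an associative (not necessarily unital) algebra over a commutative ring k, and for n ≥ 3 let 𝔢_n(A) ⊆ 𝔤𝔩_n(A) be the Lie subalgebra generated by the elementary matrices e_{i,j}(a) for i ≠ j, a ∈ A. Then 𝔢_n(A) equals the direct sum ⊕_{1≤i≠j≤n} e_{i,j}(A) ⊕ ⊕_{i=1}^{n-1} (e_{i,i} − e_{i+1,i+1})(A²) ⊕ e_{1,1}([A,A]), where A² is the ideal spanned by products ab and [A,A] is the span of commutators ab − ba. -/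
open Matrix

variable {k A : Type*} [CommRing k] [NonUnitalRing A] [Module k A]
  [SMulCommClass k A A] [IsScalarTower k A A]

/-- The ideal `A²`: the (`k`-)span of all products `a*b` (which coincides with the
additive span since the set of products is closed under scalars). -/
def sqIdeal (k : Type*) (A : Type*) [CommRing k] [NonUnitalRing A] [Module k A]
    [SMulCommClass k A A] [IsScalarTower k A A] : Submodule k A :=
  Submodule.span k {x : A | ∃ a b : A, x = a * b}

/-- `[A,A]`: the span of all commutators `a*b - b*a`. -/
def commIdeal (k : Type*) (A : Type*) [CommRing k] [NonUnitalRing A] [Module k A]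
    [SMulCommClass k A A] [IsScalarTower k A A] : Submodule k A :=
  Submodule.span k {x : A | ∃ a b : A, x = a * b - b * a}

/-- `e_{i,j}(S)`: matrices supported in position `(i,j)` with entry in `S`. -/
def eSet {n : ℕ} (i j : Fin n) (S : Set A) : Set (Matrix (Fin n) (Fin n) A) :=
  {m | ∃ a ∈ S, m = Matrix.single i j a}

/-- `(e_{i,i} - e_{j,j})(S)`. -/
def dSet {n : ℕ} (i j : Fin n) (S : Set A) : Set (Matrix (Fin n) (Fin n) A) :=
  {m | ∃ a ∈ S, m = Matrix.single i i a - Matrix.single j j a}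

/-- The Lie subalgebra `𝔢_n(A) ⊆ 𝔤𝔩_n(A)` generated by the off-diagonal elementary
matrices `e_{i,j}(a)` (`i ≠ j`, `a ∈ A`): the smallest `k`-submodule containing them
and closed under the commutator bracket `[x,y] = xy - yx`. -/
def eLie (k : Type*) {A : Type*} [CommRing k] [NonUnitalRing A] [Module k A]
    [SMulCommClass k A A] [IsScalarTower k A A] (n : ℕ) :
    Submodule k (Matrix (Fin n) (Fin n) A) :=
  sInf {S | (∀ (i j : Fin n), i ≠ j → ∀ a : A, Matrix.single i j a ∈ S) ∧
    ∀ x ∈ S, ∀ y ∈ S, x * y - y * x ∈ S}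

/-! ### Auxiliary lemmas -/

theorem stdB_sub {n : ℕ} (i j : Fin n) (a b : A) :
    Matrix.single i j (a - b)
      = Matrix.single i j a - Matrix.single i j b := by
  ext i' j'
  simp only [Matrix.sub_apply, Matrix.single, Matrix.of_apply]
  split <;> simp

theorem commIdeal_le_sqIdeal : commIdeal k A ≤ sqIdeal k A := by
  refine Submodule.span_le.2 ?_
  rintro _ ⟨a, b, rfl⟩
  exact sub_mem (Submodule.subset_span ⟨a, b, rfl⟩) (Submodule.subset_span ⟨b, a, rfl⟩)

theorem eLie_gen {n : ℕ} {i j : Fin n} (h : i ≠ j) (a : A) :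
    Matrix.single i j a ∈ eLie k (A := A) n := by
  rw [eLie, Submodule.mem_sInf]
  exact fun S hS => hS.1 i j h a

theorem eLie_bracket {n : ℕ} {x y : Matrix (Fin n) (Fin n) A}
    (hx : x ∈ eLie k (A := A) n) (hy : y ∈ eLie k (A := A) n) :
    x * y - y * x ∈ eLie k (A := A) n := by
  rw [eLie, Submodule.mem_sInf] at *
  exact fun S hS => hS.2 x (hx S hS) y (hy S hS)

/-- Existence of a third index when `3 ≤ n`. -/
theorem exists_third {n : ℕ} (hn : 3 ≤ n) (i j : Fin n) :
    ∃ p : Fin n, p ≠ i ∧ p ≠ j := by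
  obtain ⟨m, hm, hmi, hmj⟩ : ∃ m : ℕ, m < n ∧ m ≠ (i : ℕ) ∧ m ≠ (j : ℕ) := by
    by_cases hi0 : (i : ℕ) = 0 <;> by_cases hj0 : (j : ℕ) = 0 <;>
      by_cases hi1 : (i : ℕ) = 1 <;> by_cases hj1 : (j : ℕ) = 1 <;>
      first
        | exact ⟨0, by omega, by omega, by omega⟩
        | exact ⟨1, by omega, by omega, by omega⟩
        | exact ⟨2, by omega, by omega, by omega⟩
  exact ⟨⟨m, hm⟩, fun h => hmi (congrArg Fin.val h), fun h => hmj (congrArg Fin.val h)⟩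

/-- `[e_{i,p}(a), e_{p,i}(b)] = e_{i,i}(ab) - e_{p,p}(ba)` is in `𝔢ₙ(A)`. -/
theorem eLie_basic {n : ℕ} {i p : Fin n} (h : i ≠ p) (a b : A) :
    Matrix.single i i (a * b) - Matrix.single p p (b * a)
      ∈ eLie k (A := A) n := by
  have := eLie_bracket (k := k) (eLie_gen h a) (eLie_gen h.symm b)
  rwa [Matrix.single_mul_single_same, Matrix.single_mul_single_same] at this

theorem diagDiff_mem_eLie {n : ℕ} (hn : 3 ≤ n) {i j : Fin n} (hij : i ≠ j) (a b : A) :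
    Matrix.single i i (a * b) - Matrix.single j j (a * b)
      ∈ eLie k (A := A) n := by
  obtain ⟨p, hpi, hpj⟩ := exists_third hn i j
  have h1 := eLie_basic (k := k) (A := A) (n := n) (Ne.symm hpi) a b
  have h2 := eLie_basic (k := k) (A := A) (n := n) hpj b a
  have h3 := add_mem h1 h2
  rwa [sub_add_sub_cancel] at h3

theorem diagComm_mem_eLie {n : ℕ} (hn : 3 ≤ n) (i : Fin n) (a b : A) :
    Matrix.single i i (a * b - b * a) ∈ eLie k (A := A) n := by
  obtain ⟨p, hpi, -⟩ := exists_third hn i i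
  have h1 := eLie_basic (k := k) (A := A) (n := n) (Ne.symm hpi) a b
  have h2 := diagDiff_mem_eLie (k := k) (A := A) hn (Ne.symm hpi) b a
  have h3 := sub_mem h1 h2
  rwa [sub_sub_sub_cancel_right, ← stdB_sub] at h3

/-! ### The right-hand side -/

variable (k) in
/-- The generating set of the right-hand side span. -/
def genSet (n : ℕ) (h0 : 0 < n) : Set (Matrix (Fin n) (Fin n) A) :=
  ((⋃ (i : Fin n) (j : Fin n) (_ : i ≠ j), eSet i j (Set.univ : Set A)) ∪
   (⋃ (i : Fin n) (j : Fin n) (_ : (j : ℕ) = (i : ℕ) + 1),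
      dSet i j (sqIdeal k A : Set A)) ∪
   eSet (⟨0, h0⟩ : Fin n) (⟨0, h0⟩ : Fin n) (commIdeal k A : Set A))

theorem ge1 {n : ℕ} (h0 : 0 < n) {i j : Fin n} (hij : i ≠ j) (a : A) :
    Matrix.single i j a ∈ Submodule.span k (genSet k n h0) :=
  Submodule.subset_span <| Or.inl <| Or.inl <|
    Set.mem_iUnion.2 ⟨i, Set.mem_iUnion.2 ⟨j, Set.mem_iUnion.2 ⟨hij, a, trivial, rfl⟩⟩⟩

theorem ge2 {n : ℕ} (h0 : 0 < n) {i j : Fin n} (hij : (j : ℕ) = (i : ℕ) + 1) {x : A}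
    (hx : x ∈ sqIdeal k A) :
    Matrix.single i i x - Matrix.single j j x
      ∈ Submodule.span k (genSet k n h0) :=
  Submodule.subset_span <| Or.inl <| Or.inr <|
    Set.mem_iUnion.2 ⟨i, Set.mem_iUnion.2 ⟨j, Set.mem_iUnion.2 ⟨hij, x, hx, rfl⟩⟩⟩

theorem ge3 {n : ℕ} (h0 : 0 < n) {c : A} (hc : c ∈ commIdeal k A) :
    Matrix.single (⟨0, h0⟩ : Fin n) (⟨0, h0⟩ : Fin n) c
      ∈ Submodule.span k (genSet k n h0) :=
  Submodule.subset_span <| Or.inr ⟨c, hc, rfl⟩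

theorem geDiag_aux {n : ℕ} (h0 : 0 < n) {x : A} (hx : x ∈ sqIdeal k A) :
    ∀ (v : ℕ) (hv : v < n),
      Matrix.single (⟨v, hv⟩ : Fin n) (⟨v, hv⟩ : Fin n) x -
        Matrix.single (⟨0, h0⟩ : Fin n) (⟨0, h0⟩ : Fin n) x
        ∈ Submodule.span k (genSet k n h0) := by
  intro v
  induction v with
  | zero => intro hv; simpa using zero_mem _
  | succ w ih =>
    intro hv
    have hw : w < n := by omega
    have h1 := ih hw
    have h2 : Matrix.single (⟨w, hw⟩ : Fin n) (⟨w, hw⟩ : Fin n) x -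
        Matrix.single (⟨w + 1, hv⟩ : Fin n) (⟨w + 1, hv⟩ : Fin n) x
        ∈ Submodule.span k (genSet k n h0) := ge2 h0 rfl hx
    have h3 := sub_mem h1 h2
    have he : Matrix.single (⟨w + 1, hv⟩ : Fin n) (⟨w + 1, hv⟩ : Fin n) x -
        Matrix.single (⟨0, h0⟩ : Fin n) (⟨0, h0⟩ : Fin n) x =
        (Matrix.single (⟨w, hw⟩ : Fin n) (⟨w, hw⟩ : Fin n) x -
          Matrix.single (⟨0, h0⟩ : Fin n) (⟨0, h0⟩ : Fin n) x) -
        (Matrix.single (⟨w, hw⟩ : Fin n) (⟨w, hw⟩ : Fin n) x -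
          Matrix.single (⟨w + 1, hv⟩ : Fin n) (⟨w + 1, hv⟩ : Fin n) x) := by
      abel
    rwa [← he] at h3

theorem geDiag {n : ℕ} (h0 : 0 < n) (i j : Fin n) {x : A} (hx : x ∈ sqIdeal k A) :
    Matrix.single i i x - Matrix.single j j x
      ∈ Submodule.span k (genSet k n h0) := by
  have h1 := geDiag_aux (k := k) h0 hx (i : ℕ) i.2
  have h2 := geDiag_aux (k := k) h0 hx (j : ℕ) j.2
  have h3 := sub_mem h1 h2
  have he : (⟨(i : ℕ), i.2⟩ : Fin n) = i := rfl
  have he' : (⟨(j : ℕ), j.2⟩ : Fin n) = j := rfl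
  rw [he, he', sub_sub_sub_cancel_right] at h3
  exact h3

/-- membership of matrices with diagonal in `A²` and trace in `[A,A]`. -/
theorem mem_R_of {n : ℕ} (h0 : 0 < n) (m : Matrix (Fin n) (Fin n) A)
    (hd : ∀ i, m i i ∈ sqIdeal k A) (ht : ∑ i, m i i ∈ commIdeal k A) :
    m ∈ Submodule.span k (genSet k n h0) := by
  rw [matrix_eq_sum_single m]
  have split : ∀ i : Fin n, ∑ j, Matrix.single i j (m i j) =
      Matrix.single i i (m i i) +
        ∑ j ∈ Finset.univ.erase i, Matrix.single i j (m i j) :=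
    fun i => (Finset.add_sum_erase _ _ (Finset.mem_univ i)).symm
  rw [Finset.sum_congr rfl fun i _ => split i, Finset.sum_add_distrib]
  refine add_mem ?_ (Submodule.sum_mem _ fun i _ => Submodule.sum_mem _ fun j hj =>
    ge1 h0 (Finset.ne_of_mem_erase hj).symm _)
  · -- diagonal part
    have hsum : ∀ (i0 : Fin n) (d : Fin n → A),
        Matrix.single i0 i0 (∑ i, d i) = ∑ i, Matrix.single i0 i0 (d i) :=
      fun i0 d => map_sum (AddMonoidHom.mk' (fun a => Matrix.single i0 i0 a)
        (Matrix.single_add i0 i0)) d Finset.univ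
    have key : ∑ i, Matrix.single i i (m i i) =
        (∑ i, (Matrix.single i i (m i i) -
          Matrix.single (⟨0, h0⟩ : Fin n) (⟨0, h0⟩ : Fin n) (m i i))) +
        Matrix.single (⟨0, h0⟩ : Fin n) (⟨0, h0⟩ : Fin n) (∑ i, m i i) := by
      rw [hsum, Finset.sum_sub_distrib]
      abel
    rw [key]
    exact add_mem (Submodule.sum_mem _ fun i _ => geDiag h0 i _ (hd i)) (ge3 h0 ht)

theorem bracket_mem_R {n : ℕ} (h0 : 0 < n) (x y : Matrix (Fin n) (Fin n) A) :
    x * y - y * x ∈ Submodule.span k (genSet k n h0) := by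
  refine mem_R_of h0 _ (fun i => ?_) ?_
  · have : (x * y - y * x) i i = ∑ j, (x i j * y j i - y i j * x j i) := by
      simp [Matrix.sub_apply, Matrix.mul_apply, Finset.sum_sub_distrib]
    rw [this]
    exact Submodule.sum_mem _ fun j _ => sub_mem (Submodule.subset_span ⟨_, _, rfl⟩)
      (Submodule.subset_span ⟨_, _, rfl⟩)
  · have key : ∑ i, (x * y - y * x) i i =
        ∑ i, ∑ j, (x i j * y j i - y j i * x i j) := by
      have e2 : (∑ i : Fin n, ∑ j : Fin n, y i j * x j i) =
          ∑ i : Fin n, ∑ j : Fin n, y j i * x i j := Finset.sum_comm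
      simp only [Matrix.sub_apply, Matrix.mul_apply, Finset.sum_sub_distrib]
      rw [e2]
    rw [key]
    exact Submodule.sum_mem _ fun i _ => Submodule.sum_mem _ fun j _ =>
      Submodule.subset_span ⟨_, _, rfl⟩

/-! ### Main theorem -/

/-- for `n ≥ 3`,
`𝔢_n(A) = ⊕_{i≠j} e_{i,j}(A) ⊕ ⊕_{i=1}^{n-1} (e_{i,i}−e_{i+1,i+1})(A²) ⊕ e_{1,1}([A,A])`
(stated as the equality of `𝔢_n(A)` with the span of the displayed pieces). -/
theorem eLie_decomposition (n : ℕ) (hn : 3 ≤ n) :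
    eLie k (A := A) n =
      Submodule.span k
        ((⋃ (i : Fin n) (j : Fin n) (_ : i ≠ j), eSet i j (Set.univ : Set A)) ∪
         (⋃ (i : Fin n) (j : Fin n) (_ : (j : ℕ) = (i : ℕ) + 1),
            dSet i j (sqIdeal k A : Set A)) ∪
         eSet (⟨0, by omega⟩ : Fin n) (⟨0, by omega⟩ : Fin n)
           (commIdeal k A : Set A)) := by
  have h0 : 0 < n := by omega
  show eLie k (A := A) n = Submodule.span k (genSet k n h0)
  apply le_antisymm
  · -- eLie ≤ R : R satisfies the defining conditions
    refine sInf_le ⟨fun i j hij a => ge1 h0 hij a, fun x _ y _ => bracket_mem_R h0 x y⟩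
  · -- R ≤ eLie
    refine Submodule.span_le.2 ?_
    rintro m (hm | hm)
    · rcases hm with hm | hm
      · simp only [Set.mem_iUnion] at hm
        obtain ⟨i, j, hij, a, -, rfl⟩ := hm
        exact eLie_gen hij a
      · simp only [Set.mem_iUnion] at hm
        obtain ⟨i, j, hij, x, hx, rfl⟩ := hm
        -- x ∈ sqIdeal; use span_induction
        have hij' : i ≠ j := fun h => by rw [h] at hij; omega
        refine Submodule.span_induction (p := fun x _ =>
            Matrix.single i i x - Matrix.single j j x
              ∈ eLie k (A := A) n) ?_ ?_ ?_ ?_ hx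
        · rintro _ ⟨a, b, rfl⟩
          exact diagDiff_mem_eLie hn hij' a b
        · simpa using zero_mem _
        · intro a b _ _ ha hb
          have := add_mem ha hb
          rwa [sub_add_sub_comm, ← Matrix.single_add,
            ← Matrix.single_add] at this
        · intro c a _ ha
          have := Submodule.smul_mem _ c ha
          rwa [smul_sub, Matrix.smul_single, Matrix.smul_single] at this
    · obtain ⟨c, hc, rfl⟩ := hm
      refine Submodule.span_induction (p := fun c _ =>
          Matrix.single (⟨0, h0⟩ : Fin n) (⟨0, h0⟩ : Fin n) c
            ∈ eLie k (A := A) n) ?_ ?_ ?_ ?_ hc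
      · rintro _ ⟨a, b, rfl⟩
        exact diagComm_mem_eLie hn _ a b
      · simpa using zero_mem _
      · intro a b _ _ ha hb
        have := add_mem ha hb
        rwa [← Matrix.single_add] at this
      · intro c a _ ha
        have := Submodule.smul_mem _ c ha
        rwa [Matrix.smul_single] at this
end

section
/- Let A be a ring, I, J ⊴ A two-sided ideals, and let H be a functor from rings to graded abelian groups (a 'homology theory') which (i) satisfies excision: for every ring map B → C carrying an ideal K ⊴ B isomorphically onto an ideal of C, the relative groups satisfy H_*(B:K) ≅ H_*(C:K); and (ii) is nilinvariant: H_*(B:K) = 0 for every nilpotent ideal K ⊴ B. If I ∩ J is nilpotent, then the birelative groups H_*(A:I,J) vanish, where H_*(A:I,J) fits in a long exact sequence ⋯ → H_{n+1}(A/J : (I+J)/J) → H_n(A:I,J) → H_n(A:I) → H_n(A/J : (I+J)/J) → ⋯. -/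
open CategoryTheory

/-- The set of `(m+1)`-fold products of elements of `T`. -/
def prodsIn {B : Type*} [NonUnitalRing B] (T : Set B) : ℕ → Set B
  | 0 => T
  | m + 1 => {x | ∃ a ∈ T, ∃ b ∈ prodsIn T m, x = a * b}

/-- A set `T` is nilpotent if all sufficiently long products of its elements vanish. -/
def IsNilpotentSet {B : Type*} [NonUnitalRing B] (T : Set B) : Prop :=
  ∃ m : ℕ, ∀ x ∈ prodsIn T m, x = 0

/-- The quotient map `B → B/c` as a non-unital ring homomorphism. -/
def RingCon.mkNU {B : Type*} [NonUnitalNonAssocRing B] (c : RingCon B) :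
    B →ₙ+* c.Quotient where
  toFun := fun x => (x : c.Quotient)
  map_zero' := rfl
  map_add' := fun _ _ => rfl
  map_mul' := fun _ _ => rfl

/-- Lift a non-unital ring hom along the quotient map of a ring congruence. -/
def RingCon.liftNU {B C : Type*} [NonUnitalNonAssocRing B] [NonUnitalNonAssocRing C]
    (c : RingCon B) (f : B →ₙ+* C) (h : ∀ a b, c a b → f a = f b) :
    c.Quotient →ₙ+* C where
  toFun := Quotient.lift (f : B → C) (fun a b hab => h a b hab)
  map_zero' := map_zero f
  map_add' := fun x y => Quotient.inductionOn₂ x y fun a b => map_add f a b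
  map_mul' := fun x y => Quotient.inductionOn₂ x y fun a b => map_mul f a b

@[simp] lemma RingCon.liftNU_mk {B C : Type*} [NonUnitalNonAssocRing B] [NonUnitalNonAssocRing C]
    (c : RingCon B) (f : B →ₙ+* C) (h) (a : B) :
    c.liftNU f h (c.mkNU a) = f a := rfl

lemma RingCon.mkNU_surjective {B : Type*} [NonUnitalNonAssocRing B] (c : RingCon B) :
    Function.Surjective c.mkNU := fun q => Quotient.inductionOn q fun a => ⟨a, rfl⟩

lemma RingCon.mkNU_eq_iff {B : Type*} [NonUnitalNonAssocRing B] (c : RingCon B) {a b : B} :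
    c.mkNU a = c.mkNU b ↔ c a b := c.eq

lemma TwoSidedIdeal.mkNU_eq_iff {B : Type*} [NonUnitalNonAssocRing B] (K : TwoSidedIdeal B)
    {a b : B} : K.ringCon.mkNU a = K.ringCon.mkNU b ↔ a - b ∈ K := by
  rw [RingCon.mkNU_eq_iff, TwoSidedIdeal.rel_iff]

lemma TwoSidedIdeal.mkNU_eq_zero_iff {B : Type*} [NonUnitalNonAssocRing B] (K : TwoSidedIdeal B)
    {a : B} : K.ringCon.mkNU a = 0 ↔ a ∈ K := by
  rw [show (0 : K.ringCon.Quotient) = K.ringCon.mkNU 0 from (map_zero _).symm,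
    TwoSidedIdeal.mkNU_eq_iff, sub_zero]

universe u

/-- Let `H` be a homology theory of (non-unital) rings: functorial
absolute groups `H_n(B)` and relative groups `H_n(B:K)` for two-sided ideals
`K ⊴ B`, with natural long exact sequences
`⋯ → H_n(B:K) → H_n(B) → H_n(B/K) → H_{n−1}(B:K) → ⋯`.  Assume `H` satisfies
excision (a map carrying an ideal isomorphically onto an ideal induces an
isomorphism on relative groups) and is nilinvariant (`H_*(B:K) = 0` for `K`
nilpotent).  If `I, J ⊴ A` are ideals with `I ∩ J` nilpotent, then the birelative
groups `H_*(A:I,J)` — fitting in a long exact sequence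
`⋯ → H_{n+1}(A/J:(I+J)/J) → H_n(A:I,J) → H_n(A:I) → H_n(A/J:(I+J)/J) → ⋯` —
all vanish. -/
theorem birelative_vanishing
    -- the homology theory
    (H : ∀ (B : Type u) [NonUnitalRing B], ℤ → AddCommGrpCat.{u})
    (Hrel : ∀ (B : Type u) [NonUnitalRing B], TwoSidedIdeal B → ℤ → AddCommGrpCat.{u})
    (Hmap : ∀ {B C : Type u} [NonUnitalRing B] [NonUnitalRing C]
      (_ : B →ₙ+* C) (n : ℤ), H B n ⟶ H C n)
    (Hrelmap : ∀ {B C : Type u} [NonUnitalRing B] [NonUnitalRing C]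
      (f : B →ₙ+* C) (K : TwoSidedIdeal B) (L : TwoSidedIdeal C),
      (∀ x ∈ K, f x ∈ L) → ∀ n : ℤ, Hrel B K n ⟶ Hrel C L n)
    -- functoriality
    (hHcomp : ∀ {B C D : Type u} [NonUnitalRing B] [NonUnitalRing C] [NonUnitalRing D]
      (f : B →ₙ+* C) (g : C →ₙ+* D) (n : ℤ),
      Hmap (g.comp f) n = Hmap f n ≫ Hmap g n)
    (hHrelcomp : ∀ {B C D : Type u} [NonUnitalRing B] [NonUnitalRing C] [NonUnitalRing D]
      (f : B →ₙ+* C) (g : C →ₙ+* D)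
      (K : TwoSidedIdeal B) (L : TwoSidedIdeal C) (N : TwoSidedIdeal D)
      (hf : ∀ x ∈ K, f x ∈ L) (hg : ∀ x ∈ L, g x ∈ N) (n : ℤ),
      Hrelmap (g.comp f) K N (fun x hx => hg _ (hf x hx)) n =
        Hrelmap f K L hf n ≫ Hrelmap g L N hg n)
    -- the long exact sequence of a pair
    (iota : ∀ (B : Type u) [NonUnitalRing B] (K : TwoSidedIdeal B) (n : ℤ),
      Hrel B K n ⟶ H B n)
    (conn : ∀ (B : Type u) [NonUnitalRing B] (K : TwoSidedIdeal B) (n : ℤ),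
      H K.ringCon.Quotient n ⟶ Hrel B K (n - 1))
    (hex1 : ∀ (B : Type u) [NonUnitalRing B] (K : TwoSidedIdeal B) (n : ℤ),
      Function.Exact ⇑(iota B K n) ⇑(Hmap K.ringCon.mkNU n))
    (hex2 : ∀ (B : Type u) [NonUnitalRing B] (K : TwoSidedIdeal B) (n : ℤ),
      Function.Exact ⇑(Hmap K.ringCon.mkNU n) ⇑(conn B K n))
    (hex3 : ∀ (B : Type u) [NonUnitalRing B] (K : TwoSidedIdeal B) (n : ℤ),
      Function.Exact ⇑(conn B K n) ⇑(iota B K (n - 1)))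
    -- naturality of the long exact sequence
    (hnat1 : ∀ {B C : Type u} [NonUnitalRing B] [NonUnitalRing C]
      (f : B →ₙ+* C) (K : TwoSidedIdeal B) (L : TwoSidedIdeal C)
      (hf : ∀ x ∈ K, f x ∈ L) (n : ℤ),
      Hrelmap f K L hf n ≫ iota C L n = iota B K n ≫ Hmap f n)
    (hnat2 : ∀ {B C : Type u} [NonUnitalRing B] [NonUnitalRing C]
      (f : B →ₙ+* C) (K : TwoSidedIdeal B) (L : TwoSidedIdeal C)
      (hf : ∀ x ∈ K, f x ∈ L)
      (fbar : K.ringCon.Quotient →ₙ+* L.ringCon.Quotient)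
      (hfbar : ∀ x : B, fbar (K.ringCon.mkNU x) = L.ringCon.mkNU (f x)) (n : ℤ),
      Hmap fbar n ≫ conn C L n = conn B K n ≫ Hrelmap f K L hf (n - 1))
    -- excision
    (hexc : ∀ {B C : Type u} [NonUnitalRing B] [NonUnitalRing C]
      (f : B →ₙ+* C) (K : TwoSidedIdeal B) (L : TwoSidedIdeal C)
      (hf : ∀ x ∈ K, f x ∈ L),
      Set.InjOn f K → f '' K = L → ∀ n : ℤ,
        Function.Bijective ⇑(Hrelmap f K L hf n))
    -- nilinvariance
    (hnil : ∀ (B : Type u) [NonUnitalRing B] (K : TwoSidedIdeal B),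
      IsNilpotentSet (K : Set B) → ∀ n : ℤ, Subsingleton (Hrel B K n))
    -- the pair of ideals with nilpotent intersection
    (A : Type u) [NonUnitalRing A] (I J : TwoSidedIdeal A)
    (hIJ : IsNilpotentSet ((I ⊓ J : TwoSidedIdeal A) : Set A))
    -- (I+J)/J : the image of I in A/J
    (L : TwoSidedIdeal J.ringCon.Quotient)
    (hL : (L : Set J.ringCon.Quotient) = J.ringCon.mkNU '' I)
    (hmem : ∀ x ∈ I, J.ringCon.mkNU x ∈ L)
    -- the birelative groups and their long exact sequence
    (Hbi : ℤ → AddCommGrpCat.{u})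
    (alpha : ∀ n : ℤ, Hbi n ⟶ Hrel A I n)
    (delta : ∀ n : ℤ, Hrel J.ringCon.Quotient L (n + 1) ⟶ Hbi n)
    (hbex1 : ∀ n : ℤ, Function.Exact ⇑(delta n) ⇑(alpha n))
    (hbex2 : ∀ n : ℤ,
      Function.Exact ⇑(alpha n) ⇑(Hrelmap J.ringCon.mkNU I L hmem n))
    (hbex3 : ∀ n : ℤ,
      Function.Exact ⇑(Hrelmap J.ringCon.mkNU I L hmem (n + 1)) ⇑(delta n)) :
    ∀ n : ℤ, Subsingleton (Hbi n) := by

  classical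
  -- `N` is the nilpotent intersection
  set N : TwoSidedIdeal A := I ⊓ J with hNdef
  -- the image of `I` in `A/N`, as a two-sided ideal
  set M : TwoSidedIdeal N.ringCon.Quotient := TwoSidedIdeal.mk'
    (N.ringCon.mkNU '' (I : Set A))
    ⟨0, I.zero_mem, map_zero _⟩
    (fun hx hy => by
      obtain ⟨a, ha, rfl⟩ := hx; obtain ⟨b, hb, rfl⟩ := hy
      exact ⟨a + b, I.add_mem ha hb, map_add _ a b⟩)
    (fun hx => by
      obtain ⟨a, ha, rfl⟩ := hx
      exact ⟨-a, I.neg_mem ha, map_neg _ a⟩)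
    (fun {x y} hy => by
      obtain ⟨b, hb, rfl⟩ := hy
      obtain ⟨a, rfl⟩ := N.ringCon.mkNU_surjective x
      exact ⟨a * b, I.mul_mem_left a b hb, map_mul _ a b⟩)
    (fun {x y} hx => by
      obtain ⟨a, ha, rfl⟩ := hx
      obtain ⟨b, rfl⟩ := N.ringCon.mkNU_surjective y
      exact ⟨a * b, I.mul_mem_right a b ha, map_mul _ a b⟩) with hMdef
  have hM : ∀ z, z ∈ M ↔ z ∈ N.ringCon.mkNU '' (I : Set A) := fun z => by
    rw [hMdef]; exact TwoSidedIdeal.mem_mk' _ _ _ _ _ _ z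
  have hp : ∀ x ∈ I, N.ringCon.mkNU x ∈ M := fun x hx => (hM _).mpr ⟨x, hx, rfl⟩
  have hNI : ∀ x ∈ N, x ∈ I := fun x hx => ((TwoSidedIdeal.mem_inf _).mp hx).1
  have hNJ : ∀ x ∈ N, x ∈ J := fun x hx => ((TwoSidedIdeal.mem_inf _).mp hx).2
  -- the induced map `A/N → A/J`
  let g : N.ringCon.Quotient →ₙ+* J.ringCon.Quotient :=
    N.ringCon.liftNU J.ringCon.mkNU (fun a b hab =>
      (TwoSidedIdeal.mkNU_eq_iff J).mpr (hNJ _ ((TwoSidedIdeal.rel_iff N a b).mp hab)))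
  have hg : ∀ x ∈ M, g x ∈ L := by
    intro x hx
    obtain ⟨a, ha, rfl⟩ := (hM x).mp hx
    exact hmem a ha
  have hinjOn : Set.InjOn g (M : Set N.ringCon.Quotient) := by
    intro x hx y hy hxy
    obtain ⟨a, ha, rfl⟩ := (hM x).mp (SetLike.mem_coe.mp hx)
    obtain ⟨b, hb, rfl⟩ := (hM y).mp (SetLike.mem_coe.mp hy)
    have : a - b ∈ J := (TwoSidedIdeal.mkNU_eq_iff J).mp hxy
    have hab : a - b ∈ N := by
      rw [hNdef]
      exact (TwoSidedIdeal.mem_inf _).mpr ⟨I.sub_mem ha hb, this⟩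
    exact (TwoSidedIdeal.mkNU_eq_iff N).mpr hab
  have himg : g '' (M : Set N.ringCon.Quotient) = (L : Set J.ringCon.Quotient) := by
    apply Set.Subset.antisymm
    · rintro _ ⟨x, hx, rfl⟩
      exact SetLike.mem_coe.mpr (hg x (SetLike.mem_coe.mp hx))
    · intro l hl
      rw [hL] at hl
      obtain ⟨a, ha, rfl⟩ := hl
      exact ⟨N.ringCon.mkNU a, SetLike.mem_coe.mpr (hp a ha), rfl⟩
  -- the comparison isomorphism `A/I ≃ (A/N)/M` and its inverse
  let ψ : I.ringCon.Quotient →ₙ+* M.ringCon.Quotient :=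
    I.ringCon.liftNU (M.ringCon.mkNU.comp N.ringCon.mkNU) (fun a b hab => by
      show M.ringCon.mkNU (N.ringCon.mkNU a) = M.ringCon.mkNU (N.ringCon.mkNU b)
      refine (TwoSidedIdeal.mkNU_eq_iff M).mpr ?_
      rw [← map_sub]
      exact hp _ ((TwoSidedIdeal.rel_iff I a b).mp hab))
  let χ0 : N.ringCon.Quotient →ₙ+* I.ringCon.Quotient :=
    N.ringCon.liftNU I.ringCon.mkNU (fun a b hab =>
      (TwoSidedIdeal.mkNU_eq_iff I).mpr (hNI _ ((TwoSidedIdeal.rel_iff N a b).mp hab)))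
  let χ : M.ringCon.Quotient →ₙ+* I.ringCon.Quotient :=
    M.ringCon.liftNU χ0 (fun x y hxy => by
      have hxyM : x - y ∈ M := (TwoSidedIdeal.rel_iff M x y).mp hxy
      obtain ⟨i, hi, hpi⟩ := (hM _).mp hxyM
      have h1 : χ0 x - χ0 y = I.ringCon.mkNU i := by
        rw [← map_sub, ← hpi]; rfl
      have h0 : χ0 x - χ0 y = 0 := by
        rw [h1]
        exact (TwoSidedIdeal.mkNU_eq_zero_iff I).mpr hi
      exact sub_eq_zero.mp h0)
  have eχψ : χ.comp ψ = NonUnitalRingHom.id I.ringCon.Quotient := by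
    ext x
    obtain ⟨a, rfl⟩ := I.ringCon.mkNU_surjective x
    rfl
  have eψχ : ψ.comp χ = NonUnitalRingHom.id M.ringCon.Quotient := by
    ext x
    obtain ⟨q, rfl⟩ := M.ringCon.mkNU_surjective x
    obtain ⟨a, rfl⟩ := N.ringCon.mkNU_surjective q
    rfl
  have e2 : M.ringCon.mkNU.comp N.ringCon.mkNU = ψ.comp I.ringCon.mkNU := by
    ext a; rfl
  -- general fact: quotient by an `H`-acyclic ideal induces a bijection on `H`
  have hquotbij : ∀ (B : Type u) [NonUnitalRing B] (K : TwoSidedIdeal B),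
      (∀ m : ℤ, Subsingleton (Hrel B K m)) → ∀ n : ℤ,
      Function.Bijective ⇑(Hmap K.ringCon.mkNU n) := by
    intro B _ K hK n
    constructor
    · intro x y hxy
      have h0 : ∀ z, Hmap K.ringCon.mkNU n z = 0 → z = 0 := by
        intro z hz
        obtain ⟨w, hw⟩ := (hex1 B K n z).mp hz
        haveI := hK n
        rw [← hw, Subsingleton.elim w 0, map_zero]
      have := h0 (x - y) (by rw [map_sub, hxy, sub_self])
      exact sub_eq_zero.mp this
    · intro y
      haveI := hK (n - 1)
      exact (hex2 B K n y).mp (Subsingleton.elim _ _)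
  -- `H` sends identities to identities
  have hbotnil : ∀ (B : Type u) [NonUnitalRing B],
      IsNilpotentSet ((⊥ : TwoSidedIdeal B) : Set B) := by
    intro B _
    exact ⟨0, fun z hz => (TwoSidedIdeal.mem_bot _).mp hz⟩
  have hid : ∀ (B : Type u) [NonUnitalRing B] (n : ℤ) (x : H B n),
      Hmap (NonUnitalRingHom.id B) n x = x := by
    intro B _ n x
    have hb := hquotbij B ⊥ (fun m => hnil B ⊥ (hbotnil B) m) n
    apply hb.injective
    have hcomp := hHcomp (NonUnitalRingHom.id B) (⊥ : TwoSidedIdeal B).ringCon.mkNU n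
    rw [NonUnitalRingHom.comp_id] at hcomp
    exact (comp_apply _ _ _).symm.trans (by rw [← hcomp])
  -- `H` sends ring isomorphisms to bijections
  have hiso : ∀ {B C : Type u} [NonUnitalRing B] [NonUnitalRing C]
      (f : B →ₙ+* C) (h : C →ₙ+* B),
      h.comp f = NonUnitalRingHom.id B → f.comp h = NonUnitalRingHom.id C →
      ∀ n : ℤ, Function.Bijective ⇑(Hmap f n) := by
    intro B C _ _ f h h1 h2 n
    have l1 : ∀ x, Hmap h n (Hmap f n x) = x := by
      intro x
      have hc := hHcomp f h n
      rw [h1] at hc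
      rw [← comp_apply, ← hc]
      exact hid B n x
    have l2 : ∀ y, Hmap f n (Hmap h n y) = y := by
      intro y
      have hc := hHcomp h f n
      rw [h2] at hc
      rw [← comp_apply, ← hc]
      exact hid C n y
    exact ⟨fun a b hab => by rw [← l1 a, hab, l1 b], fun y => ⟨Hmap h n y, l2 y⟩⟩
  have hbijp : ∀ n : ℤ, Function.Bijective ⇑(Hmap N.ringCon.mkNU n) :=
    hquotbij A N (fun m => hnil A N hIJ m)
  have hbijψ : ∀ n : ℤ, Function.Bijective ⇑(Hmap ψ n) := hiso ψ χ eχψ eψχ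
  -- "mixed" compatibility on absolute groups
  have hmix : ∀ (m : ℤ) (w : H A m),
      Hmap M.ringCon.mkNU m (Hmap N.ringCon.mkNU m w) =
        Hmap ψ m (Hmap I.ringCon.mkNU m w) := by
    intro m w
    have h1 := hHcomp N.ringCon.mkNU M.ringCon.mkNU m
    have h2 := hHcomp I.ringCon.mkNU ψ m
    rw [e2] at h1
    rw [← comp_apply, ← h1, h2, comp_apply]
  -- the five-lemma: `Hrel(A:I) → Hrel(A/N : M)` is bijective
  have hφ : ∀ n : ℤ, Function.Bijective ⇑(Hrelmap N.ringCon.mkNU I M hp (n - 1)) := by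
    intro n
    constructor
    · -- injectivity
      have h0 : ∀ x, Hrelmap N.ringCon.mkNU I M hp (n - 1) x = 0 → x = 0 := by
        intro x hx
        have s1 : Hmap N.ringCon.mkNU (n - 1) (iota A I (n - 1) x) = 0 := by
          have hh := hnat1 N.ringCon.mkNU I M hp (n - 1)
          calc Hmap N.ringCon.mkNU (n - 1) (iota A I (n - 1) x)
              = (iota A I (n - 1) ≫ Hmap N.ringCon.mkNU (n - 1)) x := (comp_apply _ _ _).symm
            _ = (Hrelmap N.ringCon.mkNU I M hp (n - 1) ≫
                  iota N.ringCon.Quotient M (n - 1)) x := by rw [hh]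
            _ = iota N.ringCon.Quotient M (n - 1)
                  (Hrelmap N.ringCon.mkNU I M hp (n - 1) x) := comp_apply _ _ _
            _ = 0 := by rw [hx, map_zero]
        have s2 : iota A I (n - 1) x = 0 := by
          apply (hbijp (n - 1)).injective
          rw [s1, map_zero]
        obtain ⟨y, hy⟩ := (hex3 A I n x).mp s2
        have s3 : conn N.ringCon.Quotient M n (Hmap ψ n y) = 0 := by
          have hh := hnat2 N.ringCon.mkNU I M hp ψ (fun a => rfl) n
          calc conn N.ringCon.Quotient M n (Hmap ψ n y)
              = (Hmap ψ n ≫ conn N.ringCon.Quotient M n) y := (comp_apply _ _ _).symm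
            _ = (conn A I n ≫ Hrelmap N.ringCon.mkNU I M hp (n - 1)) y := by rw [hh]
            _ = Hrelmap N.ringCon.mkNU I M hp (n - 1) (conn A I n y) := comp_apply _ _ _
            _ = 0 := by rw [hy, hx]
        obtain ⟨z, hz⟩ := (hex2 N.ringCon.Quotient M n _).mp s3
        obtain ⟨w, hw⟩ := (hbijp n).surjective z
        have s5 : y = Hmap I.ringCon.mkNU n w := by
          apply (hbijψ n).injective
          rw [← hmix n w, hw, hz]
        have s6 : conn A I n y = 0 := (hex2 A I n y).mpr ⟨w, s5.symm⟩
        rw [← hy, s6]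
      intro x y hxy
      have := h0 (x - y) (by rw [map_sub, hxy, sub_self])
      exact sub_eq_zero.mp this
    · -- surjectivity
      intro x'
      obtain ⟨a, ha⟩ := (hbijp (n - 1)).surjective (iota N.ringCon.Quotient M (n - 1) x')
      have t1 : Hmap M.ringCon.mkNU (n - 1) (iota N.ringCon.Quotient M (n - 1) x') = 0 :=
        (hex1 N.ringCon.Quotient M (n - 1) _).mpr ⟨x', rfl⟩
      have t3 : Hmap I.ringCon.mkNU (n - 1) a = 0 := by
        apply (hbijψ (n - 1)).injective
        rw [map_zero, ← hmix (n - 1) a, ha, t1]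
      obtain ⟨b, hb⟩ := (hex1 A I (n - 1) a).mp t3
      have t4 : iota N.ringCon.Quotient M (n - 1)
          (x' - Hrelmap N.ringCon.mkNU I M hp (n - 1) b) = 0 := by
        rw [map_sub]
        have hh := hnat1 N.ringCon.mkNU I M hp (n - 1)
        have hiotb : iota N.ringCon.Quotient M (n - 1)
            (Hrelmap N.ringCon.mkNU I M hp (n - 1) b) =
            Hmap N.ringCon.mkNU (n - 1) (iota A I (n - 1) b) := by
          rw [← comp_apply, hh, comp_apply]
        rw [hiotb, hb, ha, sub_self]
      obtain ⟨c, hc⟩ := (hex3 N.ringCon.Quotient M n _).mp t4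
      obtain ⟨d, hd⟩ := (hbijψ n).surjective c
      have t5 : Hrelmap N.ringCon.mkNU I M hp (n - 1) (conn A I n d) =
          x' - Hrelmap N.ringCon.mkNU I M hp (n - 1) b := by
        have hh := hnat2 N.ringCon.mkNU I M hp ψ (fun a => rfl) n
        rw [← comp_apply, ← hh, comp_apply, hd, hc]
      exact ⟨b + conn A I n d, by rw [map_add, t5]; abel⟩
  have hφ' : ∀ n : ℤ, Function.Bijective ⇑(Hrelmap N.ringCon.mkNU I M hp n) := by
    intro m
    obtain ⟨n, rfl⟩ : ∃ k : ℤ, k - 1 = m := ⟨m + 1, add_sub_cancel_right m 1⟩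
    exact hφ n
  -- excision for `A/N → A/J`
  have hgbij : ∀ n : ℤ, Function.Bijective ⇑(Hrelmap g M L hg n) :=
    hexc g M L hg hinjOn himg
  -- the main relative map is bijective
  have hFbij : ∀ n : ℤ, Function.Bijective ⇑(Hrelmap J.ringCon.mkNU I L hmem n) := by
    have hFkey : ∀ (f : A →ₙ+* J.ringCon.Quotient) (hf : ∀ x ∈ I, f x ∈ L),
        f = g.comp N.ringCon.mkNU → ∀ n : ℤ,
        Function.Bijective ⇑(Hrelmap f I L hf n) := by
      rintro f hf rfl n
      have hc : Hrelmap (g.comp N.ringCon.mkNU) I L hf n =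
          Hrelmap N.ringCon.mkNU I M hp n ≫ Hrelmap g M L hg n :=
        hHrelcomp N.ringCon.mkNU g I M L hp hg n
      have hfun : ⇑(Hrelmap (g.comp N.ringCon.mkNU) I L hf n) =
          ⇑(Hrelmap g M L hg n) ∘ ⇑(Hrelmap N.ringCon.mkNU I M hp n) := by
        rw [hc]
        funext v
        exact comp_apply _ _ _
      rw [hfun]
      exact (hgbij n).comp (hφ' n)
    have e : J.ringCon.mkNU = g.comp N.ringCon.mkNU := by ext a; rfl
    exact fun n => hFkey _ hmem e n
  -- conclude via the birelative exact sequence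
  intro n
  refine subsingleton_of_forall_eq 0 fun x => ?_
  have h1 : Hrelmap J.ringCon.mkNU I L hmem n (alpha n x) = 0 :=
    (hbex2 n (alpha n x)).mpr ⟨x, rfl⟩
  have h2 : alpha n x = 0 := by
    apply (hFbij n).injective
    rw [h1, map_zero]
  obtain ⟨y, hy⟩ := (hbex1 n x).mp h2
  have h3 : delta n y = 0 := (hbex3 n y).mpr ((hFbij (n + 1)).surjective y)
  rw [← hy, h3]
end

section
/- Let {(G_n, M_n)} be an inverse system of pairs, where each G_n is a group and M_n a left G_n-module, with transition maps σ_{n+1}: (G_{n+1}, M_{n+1}) → (G_n, M_n) that are equivariant (σ(gx) = σ(g)σ(x)). Assume that for every n there exists k = k(n) > n such that σ_{k,n}(g·x) = σ_{k,n}(x) for all g ∈ G_k, x ∈ M_k. Then the pro-pair {(G_n, M_n)} is isomorphic in the pro-category of pairs to a pro-pair {(G'_n, M'_n)} in which each group G'_n acts trivially on M'_n. -/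
open CategoryTheory Opposite

/-- A pair `(G, M)`: a group `G` together with a left `G`-module
(abelian group with distributive `G`-action) `M`. -/
structure GPair : Type 1 where
  G : Type
  [grp : Group G]
  M : Type
  [ab : AddCommGroup M]
  [act : DistribMulAction G M]

attribute [instance] GPair.grp GPair.ab GPair.act

/-- A morphism of pairs: a group homomorphism and an equivariant additive map. -/
@[ext]
structure GPairHom (P Q : GPair) where
  φ : P.G →* Q.G
  ψ : P.M →+ Q.M
  equiv : ∀ (g : P.G) (m : P.M), ψ (g • m) = φ g • ψ m

instance : Category GPair where
  Hom P Q := GPairHom P Q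
  id P := ⟨MonoidHom.id _, AddMonoidHom.id _, fun _ _ => rfl⟩
  comp f g := ⟨g.φ.comp f.φ, g.ψ.comp f.ψ, fun a m => by
    simp only [AddMonoidHom.coe_comp, MonoidHom.coe_comp, Function.comp_apply,
      f.equiv, g.equiv]⟩
  id_comp f := rfl
  comp_id f := rfl
  assoc f g h := rfl

/-- A representative of a morphism of pro-pairs (towers indexed by `ℕ`). -/
structure ProTowerHom (F G : ℕᵒᵖ ⥤ GPair) where
  a : ℕ → ℕ
  ha : ∀ n, n ≤ a n
  mono : Monotone a
  f : ∀ n : ℕ, F.obj (op (a n)) ⟶ G.obj (op n)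
  compat : ∀ n : ℕ,
    f (n + 1) ≫ G.map (homOfLE (Nat.le_succ n)).op =
      F.map (homOfLE (mono (Nat.le_succ n))).op ≫ f n

/-- Mutually inverse pro-morphism representatives. -/
def ProInverse {F G : ℕᵒᵖ ⥤ GPair} (Φ : ProTowerHom F G) (Ψ : ProTowerHom G F) : Prop :=
  (∀ n : ℕ, ∃ (m : ℕ) (h1 : Φ.a (Ψ.a n) ≤ m) (h2 : n ≤ m),
      F.map (homOfLE h1).op ≫ Φ.f (Ψ.a n) ≫ Ψ.f n = F.map (homOfLE h2).op) ∧
  (∀ n : ℕ, ∃ (m : ℕ) (h1 : Ψ.a (Φ.a n) ≤ m) (h2 : n ≤ m),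
      G.map (homOfLE h1).op ≫ Ψ.f (Φ.a n) ≫ Φ.f n = G.map (homOfLE h2).op)

/-- The same pair but with the trivial action. -/
def trivAct (P : GPair) : GPair where
  G := P.G
  M := P.M
  act :=
    { smul := fun _ m => m
      one_smul := fun _ => rfl
      mul_smul := fun _ _ _ => rfl
      smul_zero := fun _ => rfl
      smul_add := fun _ _ _ => rfl }

/-- The tower `F` with all actions trivialized. -/
def trivF (F : ℕᵒᵖ ⥤ GPair) : ℕᵒᵖ ⥤ GPair where
  obj n := trivAct (F.obj n)
  map f := ⟨(F.map f).φ, (F.map f).ψ, fun _ _ => rfl⟩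
  map_id n := by
    apply GPairHom.ext
    · show (F.map (𝟙 n)).φ = MonoidHom.id _
      rw [F.map_id]; rfl
    · show (F.map (𝟙 n)).ψ = AddMonoidHom.id _
      rw [F.map_id]; rfl
  map_comp f g := by
    apply GPairHom.ext
    · show (F.map (f ≫ g)).φ = ((F.map g).φ).comp (F.map f).φ
      rw [F.map_comp]; rfl
    · show (F.map (f ≫ g)).ψ = ((F.map g).ψ).comp (F.map f).ψ
      rw [F.map_comp]; rfl

lemma map_fac (F : ℕᵒᵖ ⥤ GPair) {a b c : ℕ} (h1 : a ≤ b) (h2 : b ≤ c) (h3 : a ≤ c) :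
    F.map (homOfLE h3).op = F.map (homOfLE h2).op ≫ F.map (homOfLE h1).op := by
  rw [← F.map_comp]
  rfl

lemma psi_comp (F : ℕᵒᵖ ⥤ GPair) {a b c : ℕ} (h1 : a ≤ b) (h2 : b ≤ c) (h3 : a ≤ c)
    (x : (F.obj (op c)).M) :
    (F.map (homOfLE h3).op).ψ x
      = (F.map (homOfLE h1).op).ψ ((F.map (homOfLE h2).op).ψ x) := by
  rw [map_fac F h1 h2 h3]; rfl

lemma phi_comp (F : ℕᵒᵖ ⥤ GPair) {a b c : ℕ} (h1 : a ≤ b) (h2 : b ≤ c) (h3 : a ≤ c)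
    (g : (F.obj (op c)).G) :
    (F.map (homOfLE h3).op).φ g
      = (F.map (homOfLE h1).op).φ ((F.map (homOfLE h2).op).φ g) := by
  rw [map_fac F h1 h2 h3]; rfl

/-- let `{(G_n, M_n)}` be an inverse system of pairs (groups acting on
abelian groups) such that for every `n` there is `k > n` with
`σ_{k,n}(g • x) = σ_{k,n}(x)` for all `g ∈ G_k`, `x ∈ M_k`.  Then `{(G_n, M_n)}` is
isomorphic, in the pro-category of pairs, to a pro-pair `{(G'_n, M'_n)}` in which
every `G'_n` acts trivially on `M'_n`. -/
theorem pro_pair_trivial_action (F : ℕᵒᵖ ⥤ GPair)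
    (hF : ∀ n : ℕ, ∃ (k : ℕ) (h : n < k),
      ∀ (g : (F.obj (op k)).G) (x : (F.obj (op k)).M),
        (F.map (homOfLE h.le).op).ψ (g • x) = (F.map (homOfLE h.le).op).ψ x) :
    ∃ (F' : ℕᵒᵖ ⥤ GPair),
      (∀ (n : ℕ) (g : (F'.obj (op n)).G) (x : (F'.obj (op n)).M), g • x = x) ∧
      ∃ (Φ : ProTowerHom F F') (Ψ : ProTowerHom F' F), ProInverse Φ Ψ := by
  choose k hk hprop using hF
  -- a monotone reindexing function dominating `k`
  set a : ℕ → ℕ := fun n => Nat.rec (k 0) (fun m am => max am (k (m + 1))) n with ha_def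
  have hka : ∀ n, k n ≤ a n := by
    intro n
    cases n with
    | zero => exact le_rfl
    | succ m => exact le_max_right _ _
  have hmono : Monotone a := monotone_nat_of_le_succ fun n => le_max_left _ _
  have hna : ∀ n, n ≤ a n := fun n => (hk n).le.trans (hka n)
  -- key equivariance facts
  have key : ∀ (n : ℕ) (g : (F.obj (op (a n))).G) (x : (F.obj (op (a n))).M),
      (F.map (homOfLE (hna n)).op).ψ (g • x) = (F.map (homOfLE (hna n)).op).ψ x := by
    intro n g x
    rw [psi_comp F (hk n).le (hka n) (hna n), psi_comp F (hk n).le (hka n) (hna n),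
      (F.map (homOfLE (hka n)).op).equiv, hprop n]
  have key2 : ∀ (n : ℕ) (g : (F.obj (op (a n))).G) (x : (F.obj (op (a n))).M),
      (F.map (homOfLE (hna n)).op).φ g • (F.map (homOfLE (hna n)).op).ψ x
        = (F.map (homOfLE (hna n)).op).ψ x := by
    intro n g x
    rw [← (F.map (homOfLE (hna n)).op).equiv]
    exact key n g x
  refine ⟨trivF F, fun n g x => rfl, ?_⟩
  -- the forward map
  refine ⟨{ a := a, ha := hna, mono := hmono
            f := fun n => ⟨(F.map (homOfLE (hna n)).op).φ, (F.map (homOfLE (hna n)).op).ψ,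
              fun g x => key n g x⟩
            compat := fun n => ?_ },
          { a := a, ha := hna, mono := hmono
            f := fun n => ⟨(F.map (homOfLE (hna n)).op).φ, (F.map (homOfLE (hna n)).op).ψ,
              fun g x => (key2 n g x).symm⟩
            compat := fun n => ?_ },
          ?_, ?_⟩
  · apply GPairHom.ext
    · exact MonoidHom.ext fun g =>
        ((phi_comp F (Nat.le_succ n) (hna (n + 1)) ((Nat.le_succ n).trans (hna (n + 1))) g).symm.trans
          (phi_comp F (hna n) (hmono (Nat.le_succ n)) ((Nat.le_succ n).trans (hna (n + 1))) g))
    · exact AddMonoidHom.ext fun x =>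
        ((psi_comp F (Nat.le_succ n) (hna (n + 1)) ((Nat.le_succ n).trans (hna (n + 1))) x).symm.trans
          (psi_comp F (hna n) (hmono (Nat.le_succ n)) ((Nat.le_succ n).trans (hna (n + 1))) x))
  · apply GPairHom.ext
    · exact MonoidHom.ext fun g =>
        ((phi_comp F (Nat.le_succ n) (hna (n + 1)) ((Nat.le_succ n).trans (hna (n + 1))) g).symm.trans
          (phi_comp F (hna n) (hmono (Nat.le_succ n)) ((Nat.le_succ n).trans (hna (n + 1))) g))
    · exact AddMonoidHom.ext fun x =>
        ((psi_comp F (Nat.le_succ n) (hna (n + 1)) ((Nat.le_succ n).trans (hna (n + 1))) x).symm.trans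
          (psi_comp F (hna n) (hmono (Nat.le_succ n)) ((Nat.le_succ n).trans (hna (n + 1))) x))
  · intro n
    refine ⟨a (a n), le_rfl, (hna n).trans (hna (a n)), ?_⟩
    apply GPairHom.ext
    · exact MonoidHom.ext fun g =>
        ((phi_comp F (hna n) (hna (a n)) ((hna n).trans (hna (a n)))
            ((F.map (homOfLE (le_refl (a (a n)))).op).φ g)).symm.trans
          (phi_comp F ((hna n).trans (hna (a n))) le_rfl ((hna n).trans (hna (a n))) g).symm)
    · exact AddMonoidHom.ext fun x =>
        ((psi_comp F (hna n) (hna (a n)) ((hna n).trans (hna (a n)))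
            ((F.map (homOfLE (le_refl (a (a n)))).op).ψ x)).symm.trans
          (psi_comp F ((hna n).trans (hna (a n))) le_rfl ((hna n).trans (hna (a n))) x).symm)
  · intro n
    refine ⟨a (a n), le_rfl, (hna n).trans (hna (a n)), ?_⟩
    apply GPairHom.ext
    · exact MonoidHom.ext fun g =>
        ((phi_comp F (hna n) (hna (a n)) ((hna n).trans (hna (a n)))
            ((F.map (homOfLE (le_refl (a (a n)))).op).φ g)).symm.trans
          (phi_comp F ((hna n).trans (hna (a n))) le_rfl ((hna n).trans (hna (a n))) g).symm)
    · exact AddMonoidHom.ext fun x =>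
        ((psi_comp F (hna n) (hna (a n)) ((hna n).trans (hna (a n)))
            ((F.map (homOfLE (le_refl (a (a n)))).op).ψ x)).symm.trans
          (psi_comp F ((hna n).trans (hna (a n))) le_rfl ((hna n).trans (hna (a n))) x).symm)
end
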